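/- arXiv:1903.00202 — 7 statements merged into one kernel-verified Lean document; each statement's English description precedes it below -/
import Mathlib

section
/- Let G be a countable discrete group and H, L subgroups. If L belongs to the closure of the conjugacy class of H in the Chabauty topology, then λ_{G/L} is weakly contained in λ_{G/H}. -/
/-!
A finitely supported vector of `ℓ²(G ⧸ L)` and its image under `f ∈ ℂ[G]` are finite combinations
of Dirac vectors, and the norm of such a combination only depends on which of its points coincide.
The relevant points are the translates `a • x` with `a ∈ {1} ∪ supp f` and `x` in the support, and
`a • x = b • y` is decided by whether one element of `G` lies in `L`. Chabauty approximation gives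
a conjugate `gHg⁻¹` that agrees with `L` on these finitely many elements, so the
configuration is reproduced in `G ⧸ H` by `x ↦ out(x) g H`. Hence
`‖λ_{G/L}(f) v‖ ≤ ‖λ_{G/H}(f)‖ ‖v‖` for finitely supported `v`, and these are dense.
-/

open scoped Classical ENNReal
open Topology Filter

noncomputable section

namespace QR

/-- The evaluation of a unitary representation on an element of the group algebra `ℂ[G]`. -/
def repAlg {G : Type*} [Group G] {E : Type*} [NormedAddCommGroup E] [NormedSpace ℂ E]
    (π : G →* (E →L[ℂ] E)) (f : MonoidAlgebra ℂ G) : E →L[ℂ] E :=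
  MonoidAlgebra.lift ℂ (E →L[ℂ] E) G π f

/-- Weak containment `ρ ≺ π` of representations: `‖ρ(f)‖ ≤ ‖π(f)‖` for every element `f` of
the group algebra `ℂ[G]`. -/
def WeaklyContained {G : Type*} [Group G] {E F : Type*}
    [NormedAddCommGroup E] [NormedSpace ℂ E] [NormedAddCommGroup F] [NormedSpace ℂ F]
    (ρ : G →* (E →L[ℂ] E)) (π : G →* (F →L[ℂ] F)) : Prop :=
  ∀ f : MonoidAlgebra ℂ G, ‖repAlg ρ f‖ ≤ ‖repAlg π f‖

/-- The trivial (one-dimensional) representation `1_G`. -/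
def trivialRep (G : Type*) [Group G] : G →* (ℂ →L[ℂ] ℂ) := 1

section lp

variable {X K : Type*} [NormedAddCommGroup K] [InnerProductSpace ℂ K]

lemma memTwist (e : X ≃ X) (U : X → (K ≃ₗᵢ[ℂ] K)) (F : lp (fun _ : X => K) 2) :
    Memℓp (fun x => U x (F (e.symm x))) 2 := by
  apply memℓp_gen
  have hs : Summable fun x : X => ‖F x‖ ^ (2 : ℝ≥0∞).toReal :=
    (lp.memℓp F).summable (by norm_num)
  have : Summable fun x : X => ‖F (e.symm x)‖ ^ (2 : ℝ≥0∞).toReal :=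
    (e.symm.summable_iff (f := fun x : X => ‖F x‖ ^ (2 : ℝ≥0∞).toReal)).2 hs
  simpa [LinearIsometryEquiv.norm_map] using this

/-- The twisted translation operator on `ℓ²(X, K)`. -/
def twistOp (e : X ≃ X) (U : X → (K ≃ₗᵢ[ℂ] K)) :
    lp (fun _ : X => K) 2 →L[ℂ] lp (fun _ : X => K) 2 :=
  LinearMap.mkContinuous
    { toFun := fun F => ⟨fun x => U x (F (e.symm x)), memTwist e U F⟩
      map_add' := by
        intro F G'
        apply lp.ext
        funext x
        simp [lp.coeFn_add, Pi.add_apply]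
        rfl
      map_smul' := by
        intro c F
        apply lp.ext
        funext x
        simp [lp.coeFn_smul, Pi.smul_apply] }
    1
    (by
      intro F
      have h2 : (0:ℝ) < (2 : ℝ≥0∞).toReal := by norm_num
      rw [one_mul]
      apply le_of_eq
      rw [lp.norm_eq_tsum_rpow h2, lp.norm_eq_tsum_rpow h2]
      congr 1
      have := (e.symm).tsum_eq (f := fun x : X => ‖F x‖ ^ (2 : ℝ≥0∞).toReal)
      simpa [LinearIsometryEquiv.norm_map] using this)

@[simp] lemma twistOp_apply (e : X ≃ X) (U : X → (K ≃ₗᵢ[ℂ] K))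
    (F : lp (fun _ : X => K) 2) (x : X) :
    (twistOp e U F : ∀ _ : X, K) x = U x (F (e.symm x)) := rfl

end lp

/-- The permutation (unitary) representation of `Γ` on `ℓ²(X)` attached to an action of `Γ`
on the set `X`, given by `(π(g)F)(x) = F(g⁻¹ • x)`. -/
def permRep (Γ X : Type*) [Group Γ] [MulAction Γ X] :
    Γ →* (lp (fun _ : X => ℂ) 2 →L[ℂ] lp (fun _ : X => ℂ) 2) where
  toFun g := twistOp (MulAction.toPerm g) (fun _ => LinearIsometryEquiv.refl ℂ ℂ)
  map_one' := by
    apply ContinuousLinearMap.ext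
    intro F
    apply lp.ext
    funext x
    simp
  map_mul' := by
    intro g g'
    apply ContinuousLinearMap.ext
    intro F
    apply lp.ext
    funext x
    simp [mul_smul]

/-- The left regular representation `λ_G` of `G` on `ℓ²(G)`. -/
def regularRep (G : Type*) [Group G] :
    G →* (lp (fun _ : G => ℂ) 2 →L[ℂ] lp (fun _ : G => ℂ) 2) :=
  permRep G G

/-- The quasi-regular representation `λ_{G/H}` of `G` on `ℓ²(G/H)`. -/
def quasiRegRep (G : Type*) [Group G] (H : Subgroup G) :
    G →* (lp (fun _ : G ⧸ H => ℂ) 2 →L[ℂ] lp (fun _ : G ⧸ H => ℂ) 2) :=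
  permRep G (G ⧸ H)

/-- The embedding of `Sub(G)` into `{0,1}^G` by characteristic functions. -/
def chabautyEmbed (G : Type*) [Group G] : Subgroup G → (G → Bool) :=
  fun H g => decide (g ∈ H)

/-- The Chabauty topology on the space of subgroups of a discrete group `G`: the topology
induced from the product topology on `{0,1}^G` via characteristic functions. -/
def chabautyTopology (G : Type*) [Group G] : TopologicalSpace (Subgroup G) :=
  TopologicalSpace.induced (chabautyEmbed G) inferInstance

/-- The conjugate subgroup `gHg⁻¹`. -/
def conjSubgroup {G : Type*} [Group G] (g : G) (H : Subgroup G) : Subgroup G :=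
  Subgroup.map (MulAut.conj g).toMonoidHom H

/-- The conjugacy class of a subgroup, as a subset of `Sub(G)`. -/
def conjClass {G : Type*} [Group G] (H : Subgroup G) : Set (Subgroup G) :=
  {K | ∃ g : G, conjSubgroup g H = K}

end QR

section lp

variable {ι X Y : Type*} [DecidableEq X] [DecidableEq Y]

lemma lp.inner_sum_single_sum_single {𝕜 E : Type*} [RCLike 𝕜] [NormedAddCommGroup E]
    [InnerProductSpace 𝕜 E] (s : Finset ι) (φ : ι → X) (d : ι → E) :
    inner 𝕜 (∑ i ∈ s, lp.single 2 (φ i) (d i) : lp (fun _ : X => E) 2)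
      (∑ j ∈ s, lp.single 2 (φ j) (d j)) =
      ∑ i ∈ s, ∑ j ∈ s, if φ i = φ j then inner 𝕜 (d i) (d j) else 0 := by
  rw [sum_inner]
  simp only [inner_sum, lp.inner_single_left, lp.single_apply]
  refine Finset.sum_congr rfl fun i _ => Finset.sum_congr rfl fun j _ => ?_
  by_cases h : φ i = φ j <;> simp [h]

lemma lp.norm_sum_single_eq_of_eq_iff_eq {E : Type*} [NormedAddCommGroup E]
    [InnerProductSpace ℝ E] (s : Finset ι) (φ : ι → X) (ψ : ι → Y) (d : ι → E)
    (h : ∀ i ∈ s, ∀ j ∈ s, φ i = φ j ↔ ψ i = ψ j) :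
    ‖(∑ i ∈ s, lp.single 2 (φ i) (d i) : lp (fun _ : X => E) 2)‖ =
      ‖(∑ i ∈ s, lp.single 2 (ψ i) (d i) : lp (fun _ : Y => E) 2)‖ := by
  rw [norm_eq_sqrt_re_inner (𝕜 := ℝ), norm_eq_sqrt_re_inner (𝕜 := ℝ),
    lp.inner_sum_single_sum_single, lp.inner_sum_single_sum_single]
  refine congrArg (fun z : ℝ => √z) (Finset.sum_congr rfl fun i hi =>
    Finset.sum_congr rfl fun j hj => ?_)
  simp only [h i hi j hj]

lemma lp.opNorm_le_of_forall_sum_single {𝕜 E F : Type*} [NontriviallyNormedField 𝕜]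
    [NormedAddCommGroup E] [NormedSpace 𝕜 E] [NormedAddCommGroup F] [NormedSpace 𝕜 F]
    {p : ℝ≥0∞} [Fact (1 ≤ p)] (hp : p ≠ ⊤) (T : lp (fun _ : X => E) p →L[𝕜] F) {C : ℝ}
    (hC : 0 ≤ C)
    (h : ∀ (s : Finset X) (c : X → E),
      ‖T (∑ x ∈ s, lp.single p x (c x))‖ ≤ C * ‖∑ x ∈ s, lp.single p x (c x)‖) :
    ‖T‖ ≤ C := by
  refine T.opNorm_le_bound hC fun v => ?_
  have hv := lp.hasSum_single hp v
  exact le_of_tendsto_of_tendsto' ((T.continuous.tendsto v).comp hv).norm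
    (hv.norm.const_mul C) fun s => h s v

end lp

namespace QR

lemma repAlg_eq_sum {G E : Type*} [Group G] [NormedAddCommGroup E] [NormedSpace ℂ E]
    (π : G →* (E →L[ℂ] E)) (f : MonoidAlgebra ℂ G) :
    repAlg π f = ∑ a ∈ f.coeff.support, f.coeff a • π a := by
  rw [repAlg, MonoidAlgebra.lift_apply]
  rfl

section permRep

variable {G : Type*} [Group G] {ι X Y : Type*} [MulAction G X] [MulAction G Y] [DecidableEq X]
  [DecidableEq Y]

lemma permRep_single (g : G) (x : X) (c : ℂ) :
    permRep G X g (lp.single 2 x c) = lp.single 2 (g • x) c := by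
  refine lp.ext (funext fun y => ?_)
  change (Pi.single x c : X → ℂ) (g⁻¹ • y) = (Pi.single (g • x) c : X → ℂ) y
  simp only [Pi.single_apply, inv_smul_eq_iff]

lemma repAlg_permRep_sum_single (f : MonoidAlgebra ℂ G) (s : Finset ι) (φ : ι → X)
    (c : ι → ℂ) :
    repAlg (permRep G X) f (∑ i ∈ s, lp.single 2 (φ i) (c i)) =
      ∑ p ∈ f.coeff.support ×ˢ s, lp.single 2 (p.1 • φ p.2) (f.coeff p.1 * c p.2) := by
  rw [repAlg_eq_sum, sum_apply, Finset.sum_product]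
  refine Finset.sum_congr rfl fun a _ => ?_
  rw [smul_apply, map_sum, Finset.smul_sum]
  refine Finset.sum_congr rfl fun i _ => ?_
  rw [permRep_single, ← lp.single_smul, smul_eq_mul]

lemma norm_repAlg_permRep_sum_single_eq (f : MonoidAlgebra ℂ G) (s : Finset ι) (φ : ι → X)
    (ψ : ι → Y) (c : ι → ℂ)
    (h : ∀ a ∈ f.coeff.support, ∀ b ∈ f.coeff.support, ∀ i ∈ s, ∀ j ∈ s,
      a • φ i = b • φ j ↔ a • ψ i = b • ψ j) :
    ‖repAlg (permRep G X) f (∑ i ∈ s, lp.single 2 (φ i) (c i))‖ =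
      ‖repAlg (permRep G Y) f (∑ i ∈ s, lp.single 2 (ψ i) (c i))‖ := by
  rw [repAlg_permRep_sum_single, repAlg_permRep_sum_single]
  refine lp.norm_sum_single_eq_of_eq_iff_eq _ _ _ _ fun p hp q hq => ?_
  rw [Finset.mem_product] at hp hq
  exact h _ hp.1 _ hq.1 _ hp.2 _ hq.2

end permRep

section Chabauty

variable {G : Type*} [Group G]

lemma exists_mem_forall_mem_iff_of_mem_closure {S : Set (Subgroup G)} {L : Subgroup G}
    (hL : L ∈ closure[chabautyTopology G] S) (D : Finset G) :
    ∃ K ∈ S, ∀ d ∈ D, d ∈ K ↔ d ∈ L := by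
  let _ := chabautyTopology G
  have hU : IsOpen (chabautyEmbed G ⁻¹' ⋂ d ∈ D,
      (fun χ : G → Bool => χ d) ⁻¹' {chabautyEmbed G L d}) :=
    isOpen_induced (isOpen_biInter_finset fun d _ =>
      (continuous_apply d).isOpen_preimage _ (isOpen_discrete _))
  obtain ⟨K, hK, hKS⟩ := mem_closure_iff.1 hL _ hU (by simp)
  simp only [Set.mem_preimage, Set.mem_iInter, Set.mem_singleton_iff] at hK
  exact ⟨K, hKS, fun d hd => by simpa [chabautyEmbed] using hK d hd⟩

lemma mk_mul_eq_mk_mul_iff_mem_conjSubgroup (H : Subgroup G) (u v g : G) :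
    ((u * g : G) : G ⧸ H) = ((v * g : G) : G ⧸ H) ↔ u⁻¹ * v ∈ conjSubgroup g H := by
  rw [QuotientGroup.eq, conjSubgroup, Subgroup.mem_map_equiv, MulAut.conj_symm_apply]
  group

lemma norm_repAlg_quasiRegRep_sum_single_le {H L : Subgroup G}
    (hL : L ∈ closure[chabautyTopology G] (conjClass H)) (f : MonoidAlgebra ℂ G)
    (s : Finset (G ⧸ L)) (c : G ⧸ L → ℂ) :
    ‖repAlg (quasiRegRep G L) f (∑ x ∈ s, lp.single 2 x (c x))‖ ≤
      ‖repAlg (quasiRegRep G H) f‖ *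
        ‖(∑ x ∈ s, lp.single 2 x (c x) : lp (fun _ : G ⧸ L => ℂ) 2)‖ := by
  set A := insert 1 f.coeff.support
  obtain ⟨_, ⟨g, rfl⟩, hg⟩ := exists_mem_forall_mem_iff_of_mem_closure hL
    (((A ×ˢ A) ×ˢ (s ×ˢ s)).image fun p => (p.1.1 * p.2.1.out)⁻¹ * (p.1.2 * p.2.2.out))
  set ψ : G ⧸ L → G ⧸ H := fun x => ((x.out * g : G) : G ⧸ H)
  have hagree : ∀ a ∈ A, ∀ b ∈ A, ∀ x ∈ s, ∀ y ∈ s, a • x = b • y ↔ a • ψ x = b • ψ y := by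
    intro a ha b hb x hx y hy
    have hmem : (a * x.out)⁻¹ * (b * y.out) ∈ conjSubgroup g H ↔
        (a * x.out)⁻¹ * (b * y.out) ∈ L :=
      hg _ (Finset.mem_image_of_mem _ (Finset.mk_mem_product
        (Finset.mk_mem_product ha hb) (Finset.mk_mem_product hx hy)))
    conv_lhs => rw [← QuotientGroup.out_eq' x, ← QuotientGroup.out_eq' y]
    simp only [ψ, MulAction.Quotient.smul_mk, smul_eq_mul, ← mul_assoc]
    rw [QuotientGroup.eq, mk_mul_eq_mk_mul_iff_mem_conjSubgroup, hmem]
  set w : lp (fun _ : G ⧸ H => ℂ) 2 := ∑ x ∈ s, lp.single 2 (ψ x) (c x)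
  have hnorm : ‖w‖ = ‖(∑ x ∈ s, lp.single 2 x (c x) : lp (fun _ : G ⧸ L => ℂ) 2)‖ := by
    refine (lp.norm_sum_single_eq_of_eq_iff_eq s id ψ c fun x hx y hy => ?_).symm
    simpa using hagree 1 (Finset.mem_insert_self _ _) 1 (Finset.mem_insert_self _ _) x hx y hy
  calc ‖repAlg (quasiRegRep G L) f (∑ x ∈ s, lp.single 2 x (c x))‖
      = ‖repAlg (quasiRegRep G H) f w‖ :=
        norm_repAlg_permRep_sum_single_eq f s id ψ c fun a ha b hb =>
          hagree a (Finset.mem_insert_of_mem ha) b (Finset.mem_insert_of_mem hb)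
    _ ≤ ‖repAlg (quasiRegRep G H) f‖ * ‖w‖ := ContinuousLinearMap.le_opNorm _ _
    _ = _ := by rw [hnorm]

end Chabauty

theorem quasiRegRep_weakly_contained_of_mem_closure_conjClass_general (G : Type*) [Group G]
    (H L : Subgroup G)
    (hL : L ∈ closure[chabautyTopology G] (conjClass H)) :
    WeaklyContained (quasiRegRep G L) (quasiRegRep G H) := fun f =>
  lp.opNorm_le_of_forall_sum_single ENNReal.ofNat_ne_top _ (norm_nonneg _)
    (norm_repAlg_quasiRegRep_sum_single_le hL f)

/-- If `L` lies in the Chabauty closure of the conjugacy class of `H`, then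
`λ_{G/L}` is weakly contained in `λ_{G/H}`. -/
theorem quasiRegRep_weakly_contained_of_mem_closure_conjClass (G : Type*) [Group G]
    [Countable G] (H L : Subgroup G)
    (hL : L ∈ closure[chabautyTopology G] (conjClass H)) :
    WeaklyContained (quasiRegRep G L) (quasiRegRep G H) :=
  quasiRegRep_weakly_contained_of_mem_closure_conjClass_general G H L hL

end QR
end
end

section
/- Let G be a countable group and H a subgroup with the spectral gap property. Then H is the only point of G/H with finite H-orbit; in particular, H is self-commensurating (Comm_G(H) = H). -/
open scoped Classical ENNReal
open Topology Filter

noncomputable section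

namespace QR

section SpectralGap

variable {G : Type*} [Group G]

lemma base_fixed {H : Subgroup G} (h : H) :
    (h : G) • ((1 : G) : G ⧸ H) = ((1 : G) : G ⧸ H) := by
  rw [MulAction.Quotient.smul_mk, smul_eq_mul, mul_one]
  exact QuotientGroup.eq.mpr (by simp [H.inv_mem h.2])

/-- The action of `H` on `G/H ∖ {H}`. -/
instance sgAction (G : Type*) [Group G] (H : Subgroup G) :
    MulAction H {q : G ⧸ H // q ≠ ((1 : G) : G ⧸ H)} where
  smul h q := ⟨(h : G) • q.1, fun hEq => q.2 (by
    calc q.1 = (h : G)⁻¹ • ((h : G) • q.1) := (inv_smul_smul _ _).symm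
      _ = ((h⁻¹ : H) : G) • (((1 : G) : G ⧸ H)) := by rw [hEq]; rfl
      _ = ((1 : G) : G ⧸ H) := base_fixed _)⟩
  one_smul q := by
    apply Subtype.ext
    show ((1 : H) : G) • q.1 = q.1
    simp
  mul_smul h h' q := by
    apply Subtype.ext
    show ((h * h' : H) : G) • q.1 = (h : G) • ((h' : G) • q.1)
    rw [MulMemClass.coe_mul, mul_smul]

/-- The natural representation of `H` on `ℓ²(G/H ∖ {H})`. -/
def sgRep (G : Type*) [Group G] (H : Subgroup G) :
    H →* (lp (fun _ : {q : G ⧸ H // q ≠ ((1 : G) : G ⧸ H)} => ℂ) 2 →L[ℂ]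
      lp (fun _ : {q : G ⧸ H // q ≠ ((1 : G) : G ⧸ H)} => ℂ) 2) :=
  permRep H {q : G ⧸ H // q ≠ ((1 : G) : G ⧸ H)}

/-- `H ≤ G` has the spectral gap property if `1_H` is not weakly contained in the natural
representation of `H` on `ℓ²(G/H ∖ {H})`. -/
def HasSpectralGap (G : Type*) [Group G] (H : Subgroup G) : Prop :=
  ¬ WeaklyContained (trivialRep H) (sgRep G H)

end SpectralGap

/-!
If a coset `q ≠ H` had a finite `H`-orbit `O`, the indicator `𝟙_O` would be a nonzero
`H`-invariant vector of `ℓ²(G/H ∖ {H})`, and an invariant unit vector already witnesses the weak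
containment of `1_H`. For `g ∈ Comm_G(H)` the stabilizer of `gH` in `H` is `H ∩ gHg⁻¹`, of finite
index in `H`, so `gH` has a finite `H`-orbit and hence `gH = H`.
-/

open scoped Pointwise
open MulAction

lemma norm_repAlg_trivialRep {Γ : Type*} [Group Γ] (f : MonoidAlgebra ℂ Γ) :
    ‖repAlg (trivialRep Γ) f‖ = ‖f.coeff.sum fun _ c => c‖ := by
  have h : repAlg (trivialRep Γ) f = algebraMap ℂ (ℂ →L[ℂ] ℂ) (f.coeff.sum fun _ c => c) := by
    rw [repAlg, MonoidAlgebra.lift_apply']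
    simp only [Finsupp.sum, trivialRep, MonoidHom.one_apply, mul_one]
    rw [map_sum]
  rw [h, norm_algebraMap']

lemma weaklyContained_trivialRep_of_fixed {Γ F : Type*} [Group Γ]
    [NormedAddCommGroup F] [NormedSpace ℂ F]
    (π : Γ →* (F →L[ℂ] F)) {v : F} (hv : v ≠ 0) (hπ : ∀ g : Γ, π g v = v) :
    WeaklyContained (trivialRep Γ) π := by
  intro f
  have happ : repAlg π f v = (f.coeff.sum fun _ c => c) • v := by
    rw [repAlg, MonoidAlgebra.lift_apply, Finsupp.sum, Finsupp.sum, Finset.sum_smul]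
    simp [hπ]
  have hle : ‖f.coeff.sum fun _ c => c‖ * ‖v‖ ≤ ‖repAlg π f‖ * ‖v‖ := by
    rw [← norm_smul, ← happ]
    exact (repAlg π f).le_opNorm v
  rw [norm_repAlg_trivialRep]
  exact le_of_mul_le_mul_right hle (norm_pos_iff.mpr hv)

section PermRep

variable {Γ X : Type*} [Group Γ] [MulAction Γ X]

lemma permRep_apply (g : Γ) (F : lp (fun _ : X => ℂ) 2) (x : X) :
    (permRep Γ X g F : X → ℂ) x = F (g⁻¹ • x) := rfl

lemma exists_ne_zero_permRep_fixed_of_finite_orbit {x : X} (hx : (orbit Γ x).Finite) :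
    ∃ v : lp (fun _ : X => ℂ) 2, v ≠ 0 ∧ ∀ g : Γ, permRep Γ X g v = v := by
  have hmem : Memℓp ((orbit Γ x).indicator 1 : X → ℂ) 2 :=
    (memℓp_zero (hx.subset fun y hy => by
      by_contra h
      exact hy (Set.indicator_of_notMem h _))).of_exponent_ge bot_le
  refine ⟨⟨_, hmem⟩, fun h0 => ?_, fun g => lp.ext (funext fun y => ?_)⟩
  · have hx1 := congrArg (fun F : lp (fun _ : X => ℂ) 2 => (F : X → ℂ) x) h0
    simp at hx1
  · have hinv : g⁻¹ • y ∈ orbit Γ x ↔ y ∈ orbit Γ x := by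
      rw [← orbit_eq_iff, orbit_smul, orbit_eq_iff]
    simp only [permRep_apply, Set.indicator_apply, hinv]
    rfl

end PermRep

section Quotient

variable {G : Type*} [Group G] {H : Subgroup G}

lemma HasSpectralGap.eq_one_of_finite_orbit (hsg : HasSpectralGap G H) {q : G ⧸ H}
    (hq : (orbit H q).Finite) : q = ((1 : G) : G ⧸ H) := by
  by_contra hq1
  have hfin : (orbit H (⟨q, hq1⟩ : {x : G ⧸ H // x ≠ ((1 : G) : G ⧸ H)})).Finite :=
    (hq.preimage Subtype.val_injective.injOn).subset fun _ ⟨h, hh⟩ => ⟨h, congrArg Subtype.val hh⟩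
  obtain ⟨v, hv, hfix⟩ := exists_ne_zero_permRep_fixed_of_finite_orbit hfin
  exact hsg (weaklyContained_trivialRep_of_fixed (sgRep G H) hv hfix)

lemma stabilizer_subgroup_quotient_mk (K : Subgroup G) (g : G) :
    stabilizer K (g : G ⧸ H) = (ConjAct.toConjAct g • H).subgroupOf K := by
  ext k
  rw [mem_stabilizer_iff, Subgroup.mem_subgroupOf, Subgroup.mem_pointwise_smul_iff_inv_smul_mem,
    ← map_inv, ConjAct.toConjAct_smul, inv_inv]
  change (((k : G) * g : G) : G ⧸ H) = g ↔ _
  rw [QuotientGroup.eq, ← H.inv_mem_iff, mul_inv_rev, inv_inv, mul_assoc]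

lemma finite_orbit_of_mem_commensurator {g : G}
    (hg : g ∈ Subgroup.Commensurable.commensurator H) : (orbit H (g : G ⧸ H)).Finite := by
  apply Set.finite_of_ncard_ne_zero
  rw [← index_stabilizer, stabilizer_subgroup_quotient_mk]
  exact hg.1

lemma le_commensurator (H : Subgroup G) : H ≤ Subgroup.Commensurable.commensurator H := by
  intro g hg
  rw [Subgroup.Commensurable.commensurator_mem_iff,
    Subgroup.conjAct_pointwise_smul_eq_self (H.le_normalizer hg)]

end Quotient

theorem spectral_gap_implies_self_commensurating_general (G : Type*) [Group G]
    (H : Subgroup G) (hsg : HasSpectralGap G H) :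
    (∀ q : G ⧸ H, (Set.range fun h : H => (h : G) • q).Finite → q = ((1 : G) : G ⧸ H)) ∧
    Subgroup.Commensurable.commensurator H = H := by
  have hunique (q : G ⧸ H) (hq : (orbit H q).Finite) : q = ((1 : G) : G ⧸ H) :=
    hsg.eq_one_of_finite_orbit hq
  refine ⟨hunique, le_antisymm (fun g hg => ?_) (le_commensurator H)⟩
  simpa using QuotientGroup.eq.mp (hunique _ (finite_orbit_of_mem_commensurator hg)).symm

/-- If `H ≤ G` has the spectral gap property, then the coset `H` is the only
point of `G/H` with finite `H`-orbit; in particular `H` is self-commensurating: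
`Comm_G(H) = H`. -/
theorem spectral_gap_implies_self_commensurating (G : Type*) [Group G] [Countable G]
    (H : Subgroup G) (hsg : HasSpectralGap G H) :
    (∀ q : G ⧸ H, (Set.range fun h : H => (h : G) • q).Finite → q = ((1 : G) : G ⧸ H)) ∧
    Subgroup.Commensurable.commensurator H = H :=
  spectral_gap_implies_self_commensurating_general G H hsg

end QR
end
end

section
/- Let G be a countable group. The set of a-normal subgroups of G is a closed, G-invariant (under conjugation) subset of Sub(G) with the Chabauty topology. -/
open scoped Classical ENNReal
open Topology Filter

noncomputable section

namespace QR

/-- Amenability of a (discrete) group, via the Hulanicki–Reiter characterization: the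
trivial representation is weakly contained in the left regular representation. -/
def IsAmenable (G : Type*) [Group G] : Prop :=
  WeaklyContained (trivialRep G) (regularRep G)

/-! For `L` embedded in `K`, `ℓ²(K)` splits along the right cosets of `L` into copies of `ℓ²(L)`,
so `‖λ_K(f)‖ = ‖λ_L(f)‖` for `f` supported in `L`, while `1_K(f) = 1_L(f)`. Hence the
Hulanicki–Reiter inequality holds for every `f` whose (finite) support lies in some amenable
subgroup. If `H` is not a-normal, witnessed by `g ∉ H` and `f ∈ ℂ[gHg⁻¹ ∩ H]`, then every
`H'` agreeing with `H` on the finite set `{g} ∪ supp f ∪ g⁻¹ (supp f) g` is not a-normal either: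
the complement is open. Invariance holds since `x(gHg⁻¹)x⁻¹ ∩ gHg⁻¹ = g(yHy⁻¹ ∩ H)g⁻¹` with
`y = g⁻¹xg`. -/

section lpTwo

variable {X E : Type*} [NormedAddCommGroup E]

lemma lp_hasSum_norm_sq (ζ : lp (fun _ : X => E) 2) :
    HasSum (fun x => ‖ζ x‖ ^ 2) (‖ζ‖ ^ 2) := by
  simpa using lp.hasSum_norm (by norm_num) ζ

lemma memℓp_two_of_summable {f : X → E} (h : Summable fun x => ‖f x‖ ^ 2) : Memℓp f 2 :=
  memℓp_gen (by simpa using h)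

end lpTwo

section RegularRepRestriction

variable {L K : Type*} [Group L] [Group K]

lemma repAlg_mapDomain {E : Type*} [NormedAddCommGroup E] [NormedSpace ℂ E]
    (π : K →* (E →L[ℂ] E)) (φ : L →* K) (f : MonoidAlgebra ℂ L) :
    repAlg π (MonoidAlgebra.mapDomain φ f) = repAlg (π.comp φ) f := by
  rw [repAlg, repAlg, MonoidAlgebra.lift_apply, MonoidAlgebra.lift_apply,
    MonoidAlgebra.mapDomain, MonoidAlgebra.coeff_ofCoeff]
  exact Finsupp.sum_mapDomain_index (fun _ => zero_smul ℂ _) (fun _ _ _ => add_smul _ _ _)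

lemma repAlg_trivialRep_mapDomain (φ : L →* K) (f : MonoidAlgebra ℂ L) :
    repAlg (trivialRep K) (MonoidAlgebra.mapDomain φ f) = repAlg (trivialRep L) f := by
  rw [repAlg_mapDomain]
  rfl

lemma repAlg_regularRep_apply (f : MonoidAlgebra ℂ K) (η : lp (fun _ : K => ℂ) 2) (x : K) :
    (repAlg (regularRep K) f η : K → ℂ) x = f.coeff.sum fun g c => c * η (g⁻¹ * x) := by
  rw [repAlg, MonoidAlgebra.lift_apply]
  simp only [Finsupp.sum, sum_apply, lp.coeFn_sum, Finset.sum_apply]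
  refine Finset.sum_congr rfl fun g _ => ?_
  rw [smul_apply, lp.coeFn_smul, Pi.smul_apply, smul_eq_mul]
  rfl

/-- Right cosets `φ(L) x`: unlike left cosets, they are preserved by the left regular
representation of `L`. -/
def cosetSetoid (φ : L →* K) : Setoid K where
  r x y := ∃ l : L, φ l * x = y
  iseqv := by
    refine ⟨fun x => ⟨1, by simp⟩, ?_, ?_⟩
    · rintro x y ⟨l, rfl⟩
      exact ⟨l⁻¹, by simp⟩
    · rintro x y z ⟨l, rfl⟩ ⟨m, rfl⟩
      exact ⟨m * l, by rw [map_mul, mul_assoc]⟩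

variable {φ : L →* K} (hφ : Function.Injective φ)

def cosetEquiv : Quotient (cosetSetoid φ) × L ≃ K :=
  Equiv.ofBijective (fun p => φ p.2 * p.1.out) <| by
    constructor
    · rintro ⟨q, l⟩ ⟨q', l'⟩ h
      dsimp only at h
      obtain rfl : q = q' := by
        rw [← Quotient.out_eq q, ← Quotient.out_eq q']
        exact Quotient.sound ⟨l'⁻¹ * l, by rw [map_mul, mul_assoc, h, map_inv, inv_mul_cancel_left]⟩
      rw [hφ (mul_right_cancel h)]
    · intro x
      obtain ⟨l, hl⟩ := Quotient.mk_out (s := cosetSetoid φ) x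
      exact ⟨(⟦x⟧, l), hl⟩

lemma summable_norm_sq_cosetEquiv (ζ : lp (fun _ : K => ℂ) 2) :
    Summable fun p => ‖ζ (cosetEquiv hφ p)‖ ^ 2 :=
  (cosetEquiv hφ).summable_iff.2 (lp_hasSum_norm_sq ζ).summable

def slice (ζ : lp (fun _ : K => ℂ) 2) (q : Quotient (cosetSetoid φ)) : lp (fun _ : L => ℂ) 2 :=
  ⟨fun l => ζ (cosetEquiv hφ (q, l)),
    memℓp_two_of_summable ((summable_norm_sq_cosetEquiv hφ ζ).prod_factor q)⟩

lemma hasSum_norm_sq_slice (ζ : lp (fun _ : K => ℂ) 2) :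
    HasSum (fun q => ‖slice hφ ζ q‖ ^ 2) (‖ζ‖ ^ 2) :=
  ((cosetEquiv hφ).hasSum_iff.2 (lp_hasSum_norm_sq ζ)).prod_fiberwise
    fun q => lp_hasSum_norm_sq (slice hφ ζ q)

lemma norm_eq_norm_slice {ζ : lp (fun _ : K => ℂ) 2} {q : Quotient (cosetSetoid φ)}
    (h : ∀ q' ≠ q, slice hφ ζ q' = 0) : ‖ζ‖ = ‖slice hφ ζ q‖ := by
  have hsq := (hasSum_norm_sq_slice hφ ζ).unique
    (hasSum_single q fun q' hq' => by rw [h q' hq', norm_zero, zero_pow two_ne_zero])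
  exact (sq_eq_sq₀ (norm_nonneg _) (norm_nonneg _)).1 hsq

lemma slice_repAlg_mapDomain (f : MonoidAlgebra ℂ L) (η : lp (fun _ : K => ℂ) 2)
    (q : Quotient (cosetSetoid φ)) :
    slice hφ (repAlg (regularRep K) (MonoidAlgebra.mapDomain φ f) η) q
      = repAlg (regularRep L) f (slice hφ η q) := by
  apply lp.ext
  funext m
  change (repAlg (regularRep K) (MonoidAlgebra.mapDomain φ f) η : K → ℂ) (φ m * q.out) = _
  rw [repAlg_regularRep_apply, repAlg_regularRep_apply, MonoidAlgebra.mapDomain,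
    MonoidAlgebra.coeff_ofCoeff, Finsupp.sum_mapDomain_index (fun _ => zero_mul _)
      (fun _ _ _ => add_mul _ _ _)]
  refine Finsupp.sum_congr fun l _ => ?_
  change _ * η ((φ l)⁻¹ * (φ m * q.out)) = _ * η (φ (l⁻¹ * m) * q.out)
  rw [map_mul, map_inv, mul_assoc]

lemma norm_repAlg_mapDomain_le (hφ : Function.Injective φ) (f : MonoidAlgebra ℂ L) :
    ‖repAlg (regularRep K) (MonoidAlgebra.mapDomain φ f)‖ ≤ ‖repAlg (regularRep L) f‖ := by
  set S := repAlg (regularRep L) f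
  refine ContinuousLinearMap.opNorm_le_bound _ (norm_nonneg S) fun η => ?_
  have hTη := hasSum_norm_sq_slice hφ (repAlg (regularRep K) (MonoidAlgebra.mapDomain φ f) η)
  simp only [slice_repAlg_mapDomain] at hTη
  have hbound := (hasSum_norm_sq_slice hφ η).mul_left (‖S‖ ^ 2)
  refine (pow_le_pow_iff_left₀ (norm_nonneg _) (by positivity) two_ne_zero).1 ?_
  rw [mul_pow]
  refine hasSum_le (fun q => ?_) hTη hbound
  rw [← mul_pow]
  gcongr
  exact S.le_opNorm _

def extendSlice (q : Quotient (cosetSetoid φ)) (ξ : lp (fun _ : L => ℂ) 2) :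
    lp (fun _ : K => ℂ) 2 :=
  ⟨fun x => if ((cosetEquiv hφ).symm x).1 = q then ξ ((cosetEquiv hφ).symm x).2 else 0, by
    refine memℓp_two_of_summable ((cosetEquiv hφ).summable_iff.1 ?_)
    simp only [Function.comp_def, Equiv.symm_apply_apply]
    have hinj : Function.Injective fun l : L => (q, l) := fun _ _ h => (Prod.ext_iff.1 h).2
    refine (hinj.summable_iff fun p hp => ?_).1 ?_
    · have : p.1 ≠ q := fun h => hp ⟨p.2, by rw [← h]⟩
      simp [this]
    · simpa [Function.comp_def] using (lp_hasSum_norm_sq ξ).summable⟩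

lemma slice_extendSlice (q q' : Quotient (cosetSetoid φ)) (ξ : lp (fun _ : L => ℂ) 2) :
    slice hφ (extendSlice hφ q ξ) q' = if q' = q then ξ else 0 := by
  apply lp.ext
  funext l
  change (if ((cosetEquiv hφ).symm (cosetEquiv hφ (q', l))).1 = q then _ else _) = _
  rw [Equiv.symm_apply_apply]
  split_ifs <;> simp

lemma norm_repAlg_le_norm_repAlg_mapDomain (hφ : Function.Injective φ) (f : MonoidAlgebra ℂ L) :
    ‖repAlg (regularRep L) f‖ ≤ ‖repAlg (regularRep K) (MonoidAlgebra.mapDomain φ f)‖ := by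
  set T := repAlg (regularRep K) (MonoidAlgebra.mapDomain φ f)
  refine ContinuousLinearMap.opNorm_le_bound _ (norm_nonneg T) fun ξ => ?_
  let q : Quotient (cosetSetoid φ) := ⟦1⟧
  have hη : ‖extendSlice hφ q ξ‖ = ‖ξ‖ := by
    rw [norm_eq_norm_slice hφ (q := q) fun q' hq' => by rw [slice_extendSlice, if_neg hq'],
      slice_extendSlice, if_pos rfl]
  have hTη : ‖T (extendSlice hφ q ξ)‖ = ‖repAlg (regularRep L) f ξ‖ := by
    rw [norm_eq_norm_slice hφ (q := q) fun q' hq' => by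
        rw [slice_repAlg_mapDomain, slice_extendSlice, if_neg hq', map_zero],
      slice_repAlg_mapDomain, slice_extendSlice, if_pos rfl]
  calc ‖repAlg (regularRep L) f ξ‖ = ‖T (extendSlice hφ q ξ)‖ := hTη.symm
    _ ≤ ‖T‖ * ‖extendSlice hφ q ξ‖ := T.le_opNorm _
    _ = ‖T‖ * ‖ξ‖ := by rw [hη]

theorem norm_repAlg_regularRep_mapDomain (hφ : Function.Injective φ) (f : MonoidAlgebra ℂ L) :
    ‖repAlg (regularRep K) (MonoidAlgebra.mapDomain φ f)‖ = ‖repAlg (regularRep L) f‖ :=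
  (norm_repAlg_mapDomain_le hφ f).antisymm (norm_repAlg_le_norm_repAlg_mapDomain hφ f)

end RegularRepRestriction

section Amenability

variable {L K : Type*} [Group L] [Group K]

lemma IsAmenable.norm_repAlg_mapDomain_le (hL : IsAmenable L) {φ : L →* K}
    (hφ : Function.Injective φ) (f : MonoidAlgebra ℂ L) :
    ‖repAlg (trivialRep K) (MonoidAlgebra.mapDomain φ f)‖
      ≤ ‖repAlg (regularRep K) (MonoidAlgebra.mapDomain φ f)‖ := by
  rw [repAlg_trivialRep_mapDomain, norm_repAlg_regularRep_mapDomain hφ]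
  exact hL f

lemma IsAmenable.of_injective (hK : IsAmenable K) {φ : L →* K} (hφ : Function.Injective φ) :
    IsAmenable L := fun f => by
  simpa only [repAlg_trivialRep_mapDomain, norm_repAlg_regularRep_mapDomain hφ]
    using hK (MonoidAlgebra.mapDomain φ f)

/-- `f` is pushed forward from `K ⊓ K'`, which is amenable as a subgroup of `K'`. -/
lemma IsAmenable.norm_repAlg_le_of_support {G : Type*} [Group G] {K K' : Subgroup G}
    (hK' : IsAmenable K') (f : MonoidAlgebra ℂ K) (hf : ∀ s ∈ f.coeff.support, (s : G) ∈ K') :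
    ‖repAlg (trivialRep K) f‖ ≤ ‖repAlg (regularRep K) f‖ := by
  have hsupp : ↑f.coeff.support ⊆ Set.range (Subgroup.inclusion (inf_le_left : K ⊓ K' ≤ K)) :=
    fun s hs => ⟨⟨s, s.2, hf s hs⟩, rfl⟩
  rw [← MonoidAlgebra.mapDomain_comapDomain hsupp (Subgroup.inclusion_injective _)]
  exact (hK'.of_injective (Subgroup.inclusion_injective inf_le_right)).norm_repAlg_mapDomain_le
    (Subgroup.inclusion_injective _) _

end Amenability

section Conjugation

variable {G : Type*} [Group G]

lemma mem_conjSubgroup {g x : G} {H : Subgroup G} :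
    x ∈ conjSubgroup g H ↔ g⁻¹ * x * g ∈ H := by
  rw [conjSubgroup, Subgroup.mem_map_equiv, MulAut.conj_symm_apply]

lemma conjSubgroup_conj_inf (g x : G) (H : Subgroup G) :
    conjSubgroup x (conjSubgroup g H) ⊓ conjSubgroup g H
      = conjSubgroup g (conjSubgroup (g⁻¹ * x * g) H ⊓ H) := by
  ext y
  simp only [Subgroup.mem_inf, mem_conjSubgroup]
  group

lemma IsAmenable.conjSubgroup {H : Subgroup G} (hH : IsAmenable H) (g : G) :
    IsAmenable (conjSubgroup g H) :=
  hH.of_injective (φ := (H.equivMapOfInjective _ (MulAut.conj g).injective).symm.toMonoidHom)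
    (MulEquiv.injective _)

end Conjugation

def IsANormal {G : Type*} [Group G] (H : Subgroup G) : Prop :=
  ∀ g : G, g ∉ H → IsAmenable ↥(conjSubgroup g H ⊓ H)

section ANormal

variable {G : Type*} [Group G]

lemma IsANormal.conjSubgroup {H : Subgroup G} (hH : IsANormal H) (g : G) :
    IsANormal (conjSubgroup g H) := fun x hx => by
  rw [conjSubgroup_conj_inf]
  exact (hH _ (mt mem_conjSubgroup.2 hx)).conjSubgroup g

lemma eventually_mem_iff_chabauty (H : Subgroup G) (x : G) :
    ∀ᶠ H' in @nhds _ (chabautyTopology G) H, (x ∈ H' ↔ x ∈ H) := by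
  let := chabautyTopology G
  have hcont : Continuous fun H' : Subgroup G => chabautyEmbed G H' x :=
    (continuous_apply x).comp (continuous_induced_dom (f := chabautyEmbed G))
  have := hcont.tendsto H
  rw [nhds_discrete Bool, Filter.tendsto_pure] at this
  simpa [chabautyEmbed] using this

lemma isClosed_setOf_isANormal : IsClosed[chabautyTopology G] {H : Subgroup G | IsANormal H} := by
  let := chabautyTopology G
  refine isOpen_compl_iff.1 (isOpen_iff_eventually.2 fun H hH => ?_)
  obtain ⟨g, hg, hna⟩ : ∃ g, g ∉ H ∧ ¬IsAmenable ↥(conjSubgroup g H ⊓ H) := by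
    simpa [IsANormal] using hH
  obtain ⟨f, hf⟩ : ∃ f, ‖repAlg (regularRep _) f‖ < ‖repAlg (trivialRep _) f‖ := by
    simpa [IsAmenable, WeaklyContained] using hna
  have hsupp : ∀ᶠ H' in 𝓝 H, ∀ s ∈ f.coeff.support, (s : G) ∈ conjSubgroup g H' ⊓ H' := by
    refine (Filter.eventually_all_finset _).2 fun s _ => ?_
    obtain ⟨hs₁, hs₂⟩ := Subgroup.mem_inf.1 s.2
    filter_upwards [eventually_mem_iff_chabauty H (g⁻¹ * s * g), eventually_mem_iff_chabauty H s]
      with H' h₁ h₂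
    exact Subgroup.mem_inf.2 ⟨mem_conjSubgroup.2 (h₁.2 (mem_conjSubgroup.1 hs₁)), h₂.2 hs₂⟩
  filter_upwards [eventually_mem_iff_chabauty H g, hsupp] with H' hg' hS hA
  exact (hA g (mt hg'.1 hg) |>.norm_repAlg_le_of_support f hS).not_gt hf

end ANormal

theorem anormal_subgroups_closed_and_invariant_general (G : Type*) [Group G] :
    IsClosed[chabautyTopology G]
      {H : Subgroup G | ∀ g : G, g ∉ H → IsAmenable ↥(conjSubgroup g H ⊓ H)} ∧
    ∀ (g : G) (H : Subgroup G),
      (∀ x : G, x ∉ H → IsAmenable ↥(conjSubgroup x H ⊓ H)) →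
      (∀ x : G, x ∉ conjSubgroup g H →
        IsAmenable ↥(conjSubgroup x (conjSubgroup g H) ⊓ conjSubgroup g H)) :=
  ⟨isClosed_setOf_isANormal, fun g _ hH => IsANormal.conjSubgroup hH g⟩

/-- The set of a-normal subgroups of a countable group `G` is a closed,
conjugation-invariant subset of `Sub(G)` for the Chabauty topology. -/
theorem anormal_subgroups_closed_and_invariant (G : Type*) [Group G] [Countable G] :
    IsClosed[chabautyTopology G]
      {H : Subgroup G | ∀ g : G, g ∉ H → IsAmenable ↥(conjSubgroup g H ⊓ H)} ∧
    ∀ (g : G) (H : Subgroup G),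
      (∀ x : G, x ∉ H → IsAmenable ↥(conjSubgroup x H ⊓ H)) →
      (∀ x : G, x ∉ conjSubgroup g H →
        IsAmenable ↥(conjSubgroup x (conjSubgroup g H) ⊓ conjSubgroup g H)) :=
  anormal_subgroups_closed_and_invariant_general G

end QR
end
end

section
/- Let G be a countable group and H a strongly self-commensurating, finitely generated subgroup. If L is a subgroup with the same closure of conjugacy class as H in the Chabauty topology (i.e., closure of C(L) equals closure of C(H)), then L is conjugate to H. -/
/-!
Since `H` is finitely generated, containing `H` is a Chabauty-open condition. As
`H ∈ closure C(L)`, some conjugate `M` of `L` contains `H`. Conversely `M ∈ closure C(H)`,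
so for each `x ∈ M` the finitely generated group `⟨H, x⟩` lies in some conjugate `gHg⁻¹`.
Then `gHg⁻¹ ∩ H = H` has index one in `H`, so strong self-commensuration forces `g ∈ H`,
hence `gHg⁻¹ = H` and `x ∈ H`. Thus `M = H`.
-/

open scoped Classical ENNReal
open Topology Filter

noncomputable section

namespace QR

section Chabauty

variable {G : Type*} [Group G]

theorem isOpen_setOf_subset_of_finite {F : Set G} (hF : F.Finite) :
    IsOpen[chabautyTopology G] {K : Subgroup G | F ⊆ K} := by
  have hpre : {K : Subgroup G | F ⊆ K} =
      chabautyEmbed G ⁻¹' ⋂ s ∈ F, (fun f : G → Bool => f s) ⁻¹' {true} := by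
    ext K; simp [chabautyEmbed, Set.subset_def]
  rw [hpre]
  refine isOpen_induced_iff.mpr ⟨_, ?_, rfl⟩
  exact hF.isOpen_biInter fun s _ => (isOpen_discrete _).preimage (continuous_apply s)

theorem exists_le_of_le_of_mem_closure {S : Set (Subgroup G)} {M N : Subgroup G}
    (hM : M ∈ closure[chabautyTopology G] S) (hN : N.FG) (hNM : N ≤ M) :
    ∃ K ∈ S, N ≤ K := by
  obtain ⟨T, rfl⟩ := hN
  have hTM : (T : Set G) ⊆ M := (Subgroup.closure_le M).mp hNM
  obtain ⟨K, hTK, hKS⟩ := (@_root_.mem_closure_iff _ (chabautyTopology G) _ _).mp hM _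
    (isOpen_setOf_subset_of_finite T.finite_toSet) hTM
  exact ⟨K, hKS, (Subgroup.closure_le K).mpr hTK⟩

end Chabauty

section Conjugation

open scoped Pointwise

variable {G : Type*} [Group G]

theorem conjSubgroup_eq_smul (g : G) (H : Subgroup G) : conjSubgroup g H = MulAut.conj g • H :=
  rfl

theorem self_mem_conjClass (H : Subgroup G) : H ∈ conjClass H :=
  ⟨1, by rw [conjSubgroup_eq_smul, map_one, one_smul]⟩

/-- `relIndex = 0` is Mathlib's encoding of infinite index of `gHg⁻¹ ∩ H` in `H`. -/
def IsStronglySelfCommensurating (H : Subgroup G) : Prop :=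
  ∀ g : G, g ∉ H → (conjSubgroup g H).relIndex H = 0

theorem IsStronglySelfCommensurating.conjSubgroup_eq_of_le {H : Subgroup G}
    (hH : IsStronglySelfCommensurating H) {g : G} (hle : H ≤ conjSubgroup g H) :
    conjSubgroup g H = H := by
  have hg : g ∈ H := by
    by_contra hg
    have := hH g hg
    rw [Subgroup.relIndex_eq_one.mpr hle] at this
    exact one_ne_zero this
  exact Subgroup.conj_smul_eq_self_of_mem hg

theorem IsStronglySelfCommensurating.le_of_mem_closure_conjClass {H M : Subgroup G}
    (hH : IsStronglySelfCommensurating H) (hfg : H.FG)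
    (hM : M ∈ closure[chabautyTopology G] (conjClass H)) (hHM : H ≤ M) : M ≤ H := by
  intro x hx
  have hfg' : (H ⊔ Subgroup.zpowers x).FG :=
    hfg.sup ⟨{x}, by simp [Subgroup.zpowers_eq_closure]⟩
  have hle : H ⊔ Subgroup.zpowers x ≤ M := sup_le hHM (Subgroup.zpowers_le.mpr hx)
  obtain ⟨K, ⟨g, rfl⟩, hK⟩ := exists_le_of_le_of_mem_closure hM hfg' hle
  have hKH : conjSubgroup g H = H := hH.conjSubgroup_eq_of_le (le_sup_left.trans hK)
  exact hKH ▸ hK (Subgroup.mem_sup_right (Subgroup.mem_zpowers x))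

end Conjugation

theorem conjugation_rigid_of_strongly_self_commensurating_general (G : Type*) [Group G]
    (H L : Subgroup G) (hfg : H.FG)
    (hssc : ∀ g : G, g ∉ H → Subgroup.relIndex (conjSubgroup g H) H = 0)
    (hcl : closure[chabautyTopology G] (conjClass L) =
      closure[chabautyTopology G] (conjClass H)) :
    ∃ g : G, conjSubgroup g L = H := by
  let _ := chabautyTopology G
  have hH : H ∈ closure (conjClass L) := hcl ▸ subset_closure (self_mem_conjClass H)
  obtain ⟨M, ⟨g, rfl⟩, hHM⟩ := exists_le_of_le_of_mem_closure hH hfg le_rfl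
  have hM : conjSubgroup g L ∈ closure (conjClass H) := hcl ▸ subset_closure ⟨g, rfl⟩
  have hssc' : IsStronglySelfCommensurating H := hssc
  exact ⟨g, le_antisymm (hssc'.le_of_mem_closure_conjClass hfg hM hHM) hHM⟩

/-- A strongly self-commensurating finitely generated subgroup `H` is
conjugation rigid: if the Chabauty closures of the conjugacy classes of `L` and `H` coincide,
then `L` is conjugate to `H`. -/
theorem conjugation_rigid_of_strongly_self_commensurating (G : Type*) [Group G] [Countable G]
    (H L : Subgroup G) (hfg : H.FG)
    (hssc : ∀ g : G, g ∉ H → Subgroup.relIndex (conjSubgroup g H) H = 0)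
    (hcl : closure[chabautyTopology G] (conjClass L) =
      closure[chabautyTopology G] (conjClass H)) :
    ∃ g : G, conjSubgroup g L = H :=
  conjugation_rigid_of_strongly_self_commensurating_general G H L hfg hssc hcl

end QR
end
end

section
/- Let X be an extremally disconnected Hausdorff topological space and φ : X → X a homeomorphism. Then the fixed point set Fix(φ) = {x ∈ X : φ(x) = x} is open in X. -/
namespace QR

open Set

/-! Frolík's argument. Take an open set `U` maximal among those disjoint from their image.
Every point moved by `φ` has an open neighbourhood disjoint from its image, so by maximality the
moved points all lie in the closed set `closure (U ∪ φ '' U ∪ φ ⁻¹' U)`. In an extremally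
disconnected space `closure U` is clopen and stays disjoint from `φ '' closure U`, so this closed
set contains no fixed point: it is exactly the set of moved points. -/

section

variable {X : Type*} [TopologicalSpace X]

theorem exists_maximal_isOpen_disjoint_image (f : X → X) :
    ∃ U : Set X, Maximal (fun U ↦ IsOpen U ∧ Disjoint U (f '' U)) U := by
  refine zorn_subset _ fun c hc hchain ↦ ⟨⋃₀ c, ⟨isOpen_sUnion fun s hs ↦ (hc hs).1, ?_⟩,
    fun s hs ↦ subset_sUnion_of_mem hs⟩
  rw [image_sUnion, disjoint_sUnion_left]
  intro s hs
  rw [disjoint_sUnion_right]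
  rintro _ ⟨t, ht, rfl⟩
  rcases hchain.total hs ht with hst | hts
  · exact (hc ht).2.mono_left hst
  · exact (hc hs).2.mono_right (image_mono hts)

theorem exists_isOpen_mem_disjoint_image [T2Space X] {f : X → X} (hf : Continuous f) {x : X}
    (hx : f x ≠ x) : ∃ V : Set X, IsOpen V ∧ x ∈ V ∧ Disjoint V (f '' V) := by
  obtain ⟨A, B, hA, hB, hfxA, hxB, hAB⟩ := t2_separation hx
  refine ⟨B ∩ f ⁻¹' A, hB.inter (hA.preimage hf), ⟨hxB, hfxA⟩, ?_⟩
  rw [image_inter_preimage]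
  exact hAB.symm.mono inter_subset_left inter_subset_right

theorem setOf_ne_subset_closure_of_maximal [T2Space X] {f : X → X} (hf : Continuous f)
    {U : Set X} (hU : Maximal (fun U ↦ IsOpen U ∧ Disjoint U (f '' U)) U) :
    {x | f x ≠ x} ⊆ closure (U ∪ f '' U ∪ f ⁻¹' U) := by
  intro x hx
  by_contra hxK
  obtain ⟨V, hVo, hxV, hVd⟩ := exists_isOpen_mem_disjoint_image hf hx
  set W := V \ closure (U ∪ f '' U ∪ f ⁻¹' U)
  have hW : IsOpen (U ∪ W) ∧ Disjoint (U ∪ W) (f '' (U ∪ W)) := by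
    refine ⟨hU.prop.1.union (hVo.sdiff isClosed_closure), ?_⟩
    rw [image_union, disjoint_union_left, disjoint_union_right, disjoint_union_right]
    refine ⟨⟨hU.prop.2, ?_⟩, ?_, hVd.mono sdiff_subset (image_mono sdiff_subset)⟩
    · refine disjoint_left.mpr ?_
      rintro _ hyU ⟨z, hzW, rfl⟩
      exact hzW.2 (subset_closure (Or.inr hyU))
    · exact disjoint_left.mpr fun y hyW hyfU ↦ hyW.2 (subset_closure (Or.inl (Or.inr hyfU)))
  have hxU : x ∈ U := hU.2 hW subset_union_left (Or.inr ⟨hxV, hxK⟩)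
  exact hxK (subset_closure (Or.inl (Or.inl hxU)))

theorem mem_closure_union_image_preimage_iff_of_apply_eq (φ : X ≃ₜ X) {x : X} (hx : φ x = x)
    (s : Set X) : x ∈ closure (s ∪ φ '' s ∪ φ ⁻¹' s) ↔ x ∈ closure s := by
  have hsymm : φ.symm x = x := φ.symm_apply_eq.mpr hx.symm
  rw [closure_union, closure_union, ← φ.image_closure, ← φ.preimage_closure,
    φ.image_eq_preimage_symm]
  simp only [mem_union, mem_preimage, hsymm, hx, or_self]

theorem apply_ne_self_of_mem_closure [ExtremallyDisconnected X] (φ : X ≃ₜ X)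
    {U : Set X} (hUo : IsOpen U) (hUd : Disjoint U (φ '' U)) {x : X} (hx : x ∈ closure U) :
    φ x ≠ x := by
  have hd : Disjoint (closure U) (closure (φ '' U)) :=
    (hUd.closure_left (φ.isOpen_image.mpr hUo)).closure_right
      (ExtremallyDisconnected.open_closure U hUo)
  intro hfix
  refine disjoint_left.mp hd hx ?_
  rw [← φ.image_closure]
  exact ⟨x, hx, hfix⟩

end

/-- The fixed-point set of a homeomorphism of an extremally disconnected
Hausdorff space is open. -/
theorem isOpen_fixedPoints_of_extremallyDisconnected (X : Type*) [TopologicalSpace X]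
    [T2Space X] [ExtremallyDisconnected X] (φ : X ≃ₜ X) :
    IsOpen {x : X | φ x = x} := by
  obtain ⟨U, hU⟩ := exists_maximal_isOpen_disjoint_image φ
  have hmoved := setOf_ne_subset_closure_of_maximal φ.continuous hU
  have hfixed : {x : X | φ x = x} = (closure (U ∪ φ '' U ∪ φ ⁻¹' U))ᶜ := by
    ext x
    refine ⟨fun hx hxK ↦ ?_, fun hxK ↦ not_not.mp fun hx ↦ hxK (hmoved hx)⟩
    exact apply_ne_self_of_mem_closure φ hU.prop.1 hU.prop.2
      ((mem_closure_union_image_preimage_iff_of_apply_eq φ hx U).mp hxK) hx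
  rw [hfixed]
  exact isClosed_closure.isOpen_compl

end QR
end

section
/- Let G be a group acting by homeomorphisms on an extremally disconnected Hausdorff space X. Then for every x ∈ X, G_x = G_x⁰; that is, every g fixing x fixes a neighbourhood of x pointwise, and consequently the stabilizer map Stab : X → Sub(G), x ↦ G_x, is continuous for the Chabauty topology. -/
open scoped Classical ENNReal
open Topology Filter

noncomputable section

namespace QR

lemma disjClos {X : Type*} [TopologicalSpace X] [ExtremallyDisconnected X]
    {A B : Set X} (hA : IsOpen A) (hB : IsOpen B) (h : Disjoint A B) :
    Disjoint (closure A) (closure B) := by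
  have hcA : IsOpen (closure A) := ExtremallyDisconnected.open_closure A hA
  have h1 : Disjoint (closure A) B :=
    (Set.subset_compl_iff_disjoint_left.mp
      (closure_minimal (Set.subset_compl_iff_disjoint_right.mpr h) hB.isClosed_compl)).symm
  exact Set.subset_compl_iff_disjoint_left.mp
    (closure_minimal (Set.subset_compl_iff_disjoint_left.mpr h1) hcA.isClosed_compl)

/-- Frolík: the fixed point set of a homeomorphism of an extremally disconnected
Hausdorff space is clopen. -/
lemma fix_isClopen {X : Type*} [TopologicalSpace X] [T2Space X] [ExtremallyDisconnected X]
    (f : X ≃ₜ X) : IsClopen {x | f x = x} := by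
  have hclosed : IsClosed {x | f x = x} := isClosed_eq f.continuous continuous_id
  set S : Set (Set X) := {U | IsOpen U ∧ Disjoint (f '' U) U} with hS
  obtain ⟨U, ⟨hUopen, hUdisj⟩, hUmax⟩ : ∃ U, Maximal (· ∈ S) U := by
    apply zorn_subset
    intro c hcS hchain
    refine ⟨⋃₀ c, ⟨isOpen_sUnion fun s hs => (hcS hs).1, ?_⟩,
      fun s hs => Set.subset_sUnion_of_mem hs⟩
    rw [Set.disjoint_left]
    rintro x ⟨y, ⟨A, hA, hyA⟩, rfl⟩ ⟨B, hB, hxB⟩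
    rcases hchain.total hA hB with hAB | hBA
    · exact Set.disjoint_left.mp (hcS hB).2 ⟨y, hAB hyA, rfl⟩ hxB
    · exact Set.disjoint_left.mp (hcS hA).2 ⟨y, hyA, rfl⟩ (hBA hxB)
  have hUclopen : IsClopen U := by
    have h1 : closure U ∈ S := by
      refine ⟨ExtremallyDisconnected.open_closure U hUopen, ?_⟩
      rw [f.image_closure]
      exact disjClos (f.isOpen_image.mpr hUopen) hUopen hUdisj
    have h2 : closure U = U := subset_antisymm (hUmax h1 subset_closure) subset_closure
    exact ⟨h2 ▸ isClosed_closure, hUopen⟩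
  set V : Set X := U ∪ f '' U ∪ f ⁻¹' U with hV
  have hVclopen : IsClopen V :=
    ((hUclopen.union ⟨f.isClosedMap U hUclopen.1, f.isOpenMap U hUclopen.2⟩).union
      (hUclopen.preimage f.continuous))
  have hfix : {x | f x = x} = Vᶜ := by
    ext x
    simp only [Set.mem_setOf_eq, Set.mem_compl_iff, hV, Set.mem_union, Set.mem_preimage,
      not_or]
    constructor
    · intro hfx
      refine ⟨⟨fun hxU => ?_, fun hxfU => ?_⟩, fun hfxU => ?_⟩
      · exact Set.disjoint_left.mp hUdisj ⟨x, hxU, hfx⟩ hxU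
      · obtain ⟨u, huU, hux⟩ := hxfU
        have : u = x := f.injective (by rw [hux, hfx])
        exact Set.disjoint_left.mp hUdisj ⟨x, this ▸ huU, hfx⟩ (this ▸ huU)
      · have hxU : x ∈ U := hfx ▸ hfxU
        exact Set.disjoint_left.mp hUdisj ⟨x, hxU, hfx⟩ hxU
    · rintro ⟨⟨hxU, hxfU⟩, hfxU⟩
      by_contra hne
      obtain ⟨A, B, hAo, hBo, hxA, hfxB, hAB⟩ := t2_separation hne
      set O : Set X := (f ⁻¹' A) ∩ B ∩ Vᶜ with hO
      have hOopen : IsOpen O :=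
        (((hAo.preimage f.continuous).inter hBo).inter hVclopen.compl.2)
      have hxO : x ∈ O := ⟨⟨hxA, hfxB⟩, by simp [hV, Set.mem_union, hxU, hxfU, hfxU]⟩
      have hUO : U ∪ O ∈ S := by
        refine ⟨hUopen.union hOopen, ?_⟩
        rw [Set.image_union, Set.disjoint_left]
        rintro z (⟨u, huU, rfl⟩ | ⟨o, hoO, rfl⟩) (hz | hz)
        · exact Set.disjoint_left.mp hUdisj ⟨u, huU, rfl⟩ hz
        · exact hz.2 (Or.inl (Or.inr ⟨u, huU, rfl⟩))
        · exact hoO.2 (Or.inr hz)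
        · exact hAB.le_bot ⟨hoO.1.1, hz.1.2⟩
      have := hUmax hUO Set.subset_union_left
      have hxU' : x ∈ U := this (Or.inr hxO)
      exact hxU hxU'
    -- done
  rw [hfix]
  exact ⟨hVclopen.compl.1, hVclopen.compl.2⟩


/-- For an action of a group `G` by homeomorphisms on an extremally
disconnected Hausdorff space `X`: every `g` fixing a point `x` fixes a neighbourhood of `x`
pointwise (`G_x = G_x⁰`), and consequently the stabilizer map `X → Sub(G)` is continuous for
the Chabauty topology. -/
theorem stabilizer_map_continuous_of_extremallyDisconnected (G X : Type*) [Group G]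
    [Countable G] [tX : TopologicalSpace X] [T2Space X] [ExtremallyDisconnected X]
    [MulAction G X] (hc : ∀ g : G, Continuous fun x : X => g • x) :
    (∀ (x : X) (g : G), g • x = x → ∃ U ∈ nhds x, ∀ y ∈ U, g • y = y) ∧
    Continuous[tX, chabautyTopology G] (fun x : X => MulAction.stabilizer G x) := by
  have hfix : ∀ g : G, IsClopen {x : X | g • x = x} := by
    intro g
    exact fix_isClopen ⟨MulAction.toPerm g, hc g, hc g⁻¹⟩
  constructor
  · intro x g hgx
    exact ⟨{y | g • y = y}, (hfix g).2.mem_nhds hgx, fun y hy => hy⟩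
  · rw [chabautyTopology, continuous_induced_rng]
    apply continuous_pi
    intro g
    have heq : (fun x : X => chabautyEmbed G (MulAction.stabilizer G x) g) =
        fun x => decide (g • x = x) := by
      simp only [chabautyEmbed, MulAction.mem_stabilizer_iff]
    show Continuous fun x : X => chabautyEmbed G (MulAction.stabilizer G x) g
    rw [heq]
    apply IsLocallyConstant.continuous
    intro s
    by_cases ht : true ∈ s <;> by_cases hf : false ∈ s
    · convert isOpen_univ
      ext x; simp only [Set.mem_preimage, Set.mem_univ, iff_true]
      cases h : decide (g • x = x) <;> [exact hf; exact ht]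
    · convert (hfix g).2
      ext x; by_cases h : g • x = x <;> simp [h, ht, hf]
    · convert (hfix g).1.isOpen_compl
      ext x; by_cases h : g • x = x <;> simp [h, ht, hf]
    · convert isOpen_empty
      ext x; cases h : decide (g • x = x) <;> simp [h, ht, hf]


end QR
end
end

section
/- Let G be a countable group and N a normal subgroup of G. If there exists a topologically free boundary action G ↷ X on a compact Hausdorff space such that N fixes a probability measure on X, then N = {e}. In particular, no non-trivial normal subgroup of G is weakly parabolic. -/
/-!
Strong proximality puts a point mass `δ_x` in the weak* closure of the `G`-orbit of `μ`. By
normality of `N` every measure in that orbit is `N`-invariant, and `N`-invariance is weak* closed,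
so `δ_x` is `N`-invariant, i.e. `N` fixes `x`. The fixed-point set of a normal subgroup is closed
and `G`-invariant, hence all of `X` by minimality, and topological freeness then forces `N = 1`.
-/

open scoped Classical ENNReal
open Topology Filter

noncomputable section

namespace QR

/-- An action is minimal if every orbit is dense. -/
def IsMinimalAction (G X : Type*) [Group G] [TopologicalSpace X] [MulAction G X] : Prop :=
  ∀ x : X, Dense (MulAction.orbit G x)

/-- An action is topologically free if the fixed-point set of every nontrivial group element
has empty interior. -/
def IsTopFreeAction (G X : Type*) [Group G] [TopologicalSpace X] [MulAction G X] : Prop :=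
  ∀ g : G, g ≠ 1 → interior {x : X | g • x = x} = ∅

/-- The point mass at `x`, as a probability measure. -/
def diracProb {X : Type*} [MeasurableSpace X] (x : X) : MeasureTheory.ProbabilityMeasure X :=
  ⟨MeasureTheory.Measure.dirac x, inferInstance⟩

/-- An action on a compact space is strongly proximal if the weak* closure of every `G`-orbit
in `Prob(X)` contains a point mass. -/
def IsStronglyProximal (G X : Type*) [Group G] [TopologicalSpace X] [MeasurableSpace X]
    [OpensMeasurableSpace X] [MulAction G X] : Prop :=
  ∀ μ : MeasureTheory.ProbabilityMeasure X, ∃ x : X,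
    diracProb x ∈ closure {ν : MeasureTheory.ProbabilityMeasure X |
      ∃ g : G, (ν : MeasureTheory.Measure X) =
        MeasureTheory.Measure.map (fun y : X => g • y) (μ : MeasureTheory.Measure X)}

open MeasureTheory
open scoped BoundedContinuousFunction

/- Invariance is phrased through test functions, so that closedness needs no Hausdorff property
of `ProbabilityMeasure X` (available in the library only for metrizable-like `X`). -/
theorem isClosed_setOf_forall_integral_comp_eq {X : Type*} [TopologicalSpace X]
    [MeasurableSpace X] [OpensMeasurableSpace X] {φ : X → X} (hφ : Continuous φ) :
    IsClosed {ν : ProbabilityMeasure X | ∀ f : X →ᵇ ℝ, ∫ x, f (φ x) ∂ν = ∫ x, f x ∂ν} := by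
  simp only [Set.ofPred_forall]
  exact isClosed_iInter fun f =>
    isClosed_eq (ProbabilityMeasure.continuous_integral_boundedContinuousFunction
        (f.compContinuous ⟨φ, hφ⟩))
      (ProbabilityMeasure.continuous_integral_boundedContinuousFunction f)

theorem eq_of_forall_boundedContinuousFunction_eq {X : Type*} [TopologicalSpace X] [T35Space X]
    {x y : X} (h : ∀ f : X →ᵇ ℝ, f x = f y) : x = y := by
  by_contra hne
  obtain ⟨f, hf, hfxy⟩ := separatesPoints_continuous_of_t35Space_Icc hne
  have hval := h ((BoundedContinuousFunction.mkOfCompact ⟨Subtype.val, continuous_subtype_val⟩ :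
    unitInterval →ᵇ ℝ).compContinuous ⟨f, hf⟩)
  exact hfxy (Subtype.ext hval)

section NormalSubgroup

variable {G X : Type*} [Group G] [MulAction G X] {N : Subgroup G}

theorem map_smul_map_smul_eq_of_normal [N.Normal] [MeasurableSpace X] [MeasurableConstSMul G X]
    {μ : Measure X} (hμ : ∀ n ∈ N, μ.map (n • ·) = μ) (g : G) {n : G} (hn : n ∈ N) :
    (μ.map (g • ·)).map (n • ·) = μ.map (g • ·) := by
  have hconj : ((n • ·) ∘ (g • ·) : X → X) = (g • ·) ∘ ((g⁻¹ * n * g) • ·) := by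
    funext y
    simp only [Function.comp_apply, smul_smul, ← mul_assoc, mul_inv_cancel, one_mul]
  rw [Measure.map_map (measurable_const_smul n) (measurable_const_smul g), hconj,
    ← Measure.map_map (measurable_const_smul g) (measurable_const_smul _),
    hμ _ (‹N.Normal›.conj_mem' n hn g)]

variable [TopologicalSpace X]

theorem mem_fixedPoints_of_diracProb_mem_closure_orbit [N.Normal] [MeasurableSpace X]
    [BorelSpace X] [T35Space X] [ContinuousConstSMul G X] {μ : ProbabilityMeasure X}
    (hμ : ∀ n ∈ N, (μ : Measure X).map (n • ·) = μ) {x : X}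
    (hx : diracProb x ∈ closure {ν : ProbabilityMeasure X |
      ∃ g : G, (ν : Measure X) = (μ : Measure X).map (g • ·)}) :
    x ∈ MulAction.fixedPoints N X := by
  rintro ⟨n, hn⟩
  refine eq_of_forall_boundedContinuousFunction_eq fun f => ?_
  have horbit : {ν : ProbabilityMeasure X | ∃ g : G, (ν : Measure X) = (μ : Measure X).map (g • ·)}
      ⊆ {ν | ∀ f : X →ᵇ ℝ, ∫ y, f (n • y) ∂ν = ∫ y, f y ∂ν} := by
    rintro ν ⟨g, hg⟩ f
    rw [← integral_map (measurable_const_smul n).aemeasurable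
      f.continuous.aestronglyMeasurable, hg, map_smul_map_smul_eq_of_normal hμ g hn]
  have hdirac := closure_minimal horbit
    (isClosed_setOf_forall_integral_comp_eq (continuous_const_smul n)) hx f
  simpa [diracProb, integral_dirac] using hdirac

theorem isClosed_fixedPoints_subgroup [ContinuousConstSMul G X] [T2Space X] :
    IsClosed (MulAction.fixedPoints N X) := by
  simp only [MulAction.fixedPoints, Set.ofPred_forall]
  exact isClosed_iInter fun n => isClosed_eq (continuous_const_smul (n : G)) continuous_id

theorem fixedPoints_eq_univ_of_normal [N.Normal] [ContinuousConstSMul G X] [T2Space X]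
    [MulAction.IsMinimal G X] (h : (MulAction.fixedPoints N X).Nonempty) :
    MulAction.fixedPoints N X = Set.univ :=
  (eq_empty_or_univ_of_smul_invariant_closed G isClosed_fixedPoints_subgroup
    fun g => by rintro _ ⟨y, hy, rfl⟩; exact smul_mem_fixedPoints_of_normal g hy).resolve_left
    h.ne_empty

theorem eq_bot_of_fixedPoints_eq_univ [Nonempty X] (htf : IsTopFreeAction G X)
    (h : MulAction.fixedPoints N X = Set.univ) : N = ⊥ := by
  rw [Subgroup.eq_bot_iff_forall]
  intro n hn
  by_contra hne
  have hfix : {x : X | n • x = x} = Set.univ :=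
    Set.eq_univ_of_forall fun x => (h ▸ Set.mem_univ x : x ∈ MulAction.fixedPoints N X) ⟨n, hn⟩
  simpa [hfix] using htf n hne

end NormalSubgroup

theorem normal_weakly_parabolic_is_trivial_general (G : Type*) [Group G]
    (N : Subgroup G) (hNnormal : N.Normal)
    (X : Type*) [TopologicalSpace X] [CompactSpace X] [T2Space X]
    [MeasurableSpace X] [BorelSpace X] [MulAction G X]
    (hc : ∀ g : G, Continuous fun x : X => g • x)
    (hmin : IsMinimalAction G X) (hsp : IsStronglyProximal G X)
    (htf : IsTopFreeAction G X)
    (μ : MeasureTheory.ProbabilityMeasure X)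
    (hinv : ∀ n : G, n ∈ N →
      MeasureTheory.Measure.map (fun x : X => n • x) (μ : MeasureTheory.Measure X) =
        (μ : MeasureTheory.Measure X)) :
    N = ⊥ := by
  have := hNnormal
  have : ContinuousConstSMul G X := ⟨hc⟩
  have : MulAction.IsMinimal G X := ⟨hmin⟩
  have := μ.nonempty
  obtain ⟨x, hx⟩ := hsp μ
  exact eq_bot_of_fixedPoints_eq_univ htf
    (fixedPoints_eq_univ_of_normal ⟨x, mem_fixedPoints_of_diracProb_mem_closure_orbit hinv hx⟩)

/-- If `N` is a normal subgroup of a countable group `G` and there exists a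
topologically free boundary action `G ↷ X` (compact Hausdorff, minimal, strongly proximal)
admitting an `N`-invariant probability measure, then `N` is trivial. In particular, no
non-trivial normal subgroup of `G` is weakly parabolic. -/
theorem normal_weakly_parabolic_is_trivial (G : Type*) [Group G] [Countable G]
    (N : Subgroup G) (hNnormal : N.Normal)
    (X : Type*) [TopologicalSpace X] [CompactSpace X] [T2Space X]
    [MeasurableSpace X] [BorelSpace X] [MulAction G X]
    (hc : ∀ g : G, Continuous fun x : X => g • x)
    (hmin : IsMinimalAction G X) (hsp : IsStronglyProximal G X)
    (htf : IsTopFreeAction G X)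
    (μ : MeasureTheory.ProbabilityMeasure X)
    (hinv : ∀ n : G, n ∈ N →
      MeasureTheory.Measure.map (fun x : X => n • x) (μ : MeasureTheory.Measure X) =
        (μ : MeasureTheory.Measure X)) :
    N = ⊥ :=
  normal_weakly_parabolic_is_trivial_general G N hNnormal X hc hmin hsp htf μ hinv

end QR
end
end
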